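/- arXiv:0911.2802 — 2 statements merged into one kernel-verified Lean document; each statement's English description precedes it below -/
import Mathlib

section
/- Let n ≥ 1 and let w : Fin (2n) → Fin 2 be a balanced binary word. Then there exists r with 0 ≤ r < 2n such that the rotation of w by r is a Dyck word. (Cycle lemma: every (1,1)-balanced cyclic word admits a Dyck representative.) -/
/-!
Let `G m = cyclicPrefixSum w m` be the `m`-th prefix sum of the periodic extension of `w`.
Balance makes `G` periodic with period `2n`, so a position `r < 2n` minimising `G` over one
period minimises it globally. The prefix sums of the rotation by `r` are the differences
`G (r + j) - G r`, hence nonnegative.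
-/

/-- The rotation of a word `w : Fin L → A` by `r` positions. -/
def rotate {L : ℕ} {A : Type*} (r : ℕ) (w : Fin L → A) : Fin L → A :=
  fun i => w ⟨((i : ℕ) + r) % L, Nat.mod_lt _ (Nat.lt_of_le_of_lt (Nat.zero_le _) i.isLt)⟩

/-- The `j`-th prefix sum of a binary word, where letter `0` counts `+1`
and letter `1` counts `-1`. -/
def prefixSum {L : ℕ} (w : Fin L → Fin 2) (j : ℕ) : ℤ :=
  ∑ i ∈ Finset.range j, if h : i < L then (if w ⟨i, h⟩ = 0 then 1 else -1) else 0

open Finset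

def letterValue (a : Fin 2) : ℤ := if a = 0 then 1 else -1

section

variable {L : ℕ} [NeZero L]

def cyclicPrefixSum (w : Fin L → Fin 2) (m : ℕ) : ℤ :=
  ∑ i ∈ range m, letterValue (w (Fin.ofNat L i))

theorem prefixSum_eq_cyclicPrefixSum (w : Fin L → Fin 2) {j : ℕ} (hj : j ≤ L) :
    prefixSum w j = cyclicPrefixSum w j := by
  refine sum_congr rfl fun i hi => ?_
  have hiL : i < L := (mem_range.mp hi).trans_le hj
  rw [dif_pos hiL, letterValue, Fin.ofNat_eq_cast, Fin.natCast_eq_mk hiL]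

theorem prefixSum_rotate (w : Fin L → Fin 2) (r : ℕ) {j : ℕ} (hj : j ≤ L) :
    prefixSum (rotate r w) j = cyclicPrefixSum w (r + j) - cyclicPrefixSum w r := by
  rw [cyclicPrefixSum, cyclicPrefixSum, sum_range_add, add_sub_cancel_left]
  refine sum_congr rfl fun i hi => ?_
  have hiL : i < L := (mem_range.mp hi).trans_le hj
  rw [dif_pos hiL, letterValue, rotate, add_comm r i]
  congr 3

theorem cyclicPrefixSum_periodic (w : Fin L → Fin 2) (hbal : prefixSum w L = 0) :
    Function.Periodic (cyclicPrefixSum w) L := fun m => by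
  rw [add_comm, cyclicPrefixSum, sum_range_add, ← cyclicPrefixSum,
    ← prefixSum_eq_cyclicPrefixSum w le_rfl, hbal, zero_add, cyclicPrefixSum]
  refine sum_congr rfl fun i _ => ?_
  congr 2
  ext
  simp only [Fin.val_ofNat, Nat.add_mod_left]

theorem exists_lt_forall_cyclicPrefixSum_le (w : Fin L → Fin 2) (hbal : prefixSum w L = 0) :
    ∃ r < L, ∀ m, cyclicPrefixSum w r ≤ cyclicPrefixSum w m := by
  obtain ⟨r, hr, hmin⟩ := exists_min_image (range L) (cyclicPrefixSum w)
    ⟨0, mem_range.mpr (NeZero.pos L)⟩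
  refine ⟨r, mem_range.mp hr, fun m => ?_⟩
  rw [← (cyclicPrefixSum_periodic w hbal).map_mod_nat m]
  exact hmin _ (mem_range.mpr (Nat.mod_lt m (NeZero.pos L)))

end

/-- Cycle lemma: every balanced binary word of length `2n` admits a rotation that is a
Dyck word (all prefix sums nonnegative). -/
theorem exists_rotation_isDyck
    (n : ℕ) (hn : 1 ≤ n) (w : Fin (2 * n) → Fin 2)
    (hbal : prefixSum w (2 * n) = 0) :
    ∃ r : ℕ, r < 2 * n ∧ ∀ j ≤ 2 * n, 0 ≤ prefixSum (rotate r w) j := by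
  have : NeZero (2 * n) := ⟨by omega⟩
  obtain ⟨r, hr, hmin⟩ := exists_lt_forall_cyclicPrefixSum_le w hbal
  refine ⟨r, hr, fun j hj => ?_⟩
  rw [prefixSum_rotate w r hj, sub_nonneg]
  exact hmin (r + j)
end

section
/- Let m ≥ 1 and let N_m denote the number of rotation-equivalence classes of binary words of length 2m having exactly m letters of each kind ((1,1)-balanced necklaces of length 2m). Then 2m · N_m = Σ_{d ∣ m} φ(d) · binomial(2m/d, m/d). -/
/-- Rotation-equivalence of words: `w'` is a rotation of `w`. -/
def rotEquiv {L : ℕ} {A : Type*} (w w' : Fin L → A) : Prop :=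
  ∃ r : ℕ, w' = rotate r w

/-!
Cauchy–Frobenius for the rotation action of `Fin L` on words with prescribed letter counts `c`:
`L` times the number of necklaces is the total number of (rotation, fixed word) pairs. A word
fixed by rotation by `r` has period `g = gcd L r`, so it is the `L / g`-fold repetition of an
arbitrary block of length `g` whose letter counts are `c / (L / g)`; exactly `φ k` rotations
have `gcd L r = L / k`. For the balanced binary content `(m, m)` with `L = 2m` a block with `k`
repetitions exists iff `k ∣ m`, and there are `C(2m/k, m/k)` of them.
-/

open Finset
open scoped Nat

section Rotation

variable {L : ℕ} {A : Type*}

theorem rotate_zero (w : Fin L → A) : rotate 0 w = w := by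
  funext i
  simp [rotate, Nat.mod_eq_of_lt i.isLt]

theorem rotate_rotate (a b : ℕ) (w : Fin L → A) : rotate a (rotate b w) = rotate (a + b) w := by
  funext i
  simp only [rotate, Nat.mod_add_mod, Nat.add_assoc]

theorem rotate_congr {a b : ℕ} (h : a ≡ b [MOD L]) (w : Fin L → A) :
    rotate a w = rotate b w := by
  funext i
  simp only [rotate]
  congr 2
  exact Nat.ModEq.add_left _ h

theorem rotate_length (w : Fin L → A) : rotate L w = w :=
  (rotate_congr (Nat.modEq_zero_iff_dvd.2 dvd_rfl) w).trans (rotate_zero w)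

theorem rotate_mul_eq_self {r : ℕ} {w : Fin L → A} (h : rotate r w = w) (k : ℕ) :
    rotate (k * r) w = w := by
  induction k with
  | zero => simpa using rotate_zero w
  | succ k ih => rw [Nat.succ_mul, ← rotate_rotate, h, ih]

/-- The periods of a word form a subgroup of `ℤ/L`, so `r` is a period iff `gcd L r` is. -/
theorem rotate_eq_self_iff_gcd [NeZero L] (r : ℕ) (w : Fin L → A) :
    rotate r w = w ↔ rotate (L.gcd r) w = w := by
  constructor
  · intro h
    obtain hlt | heq := (Nat.le_of_dvd (NeZero.pos L) (L.gcd_dvd_left r)).lt_or_eq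
    · obtain ⟨u, -, hu⟩ := Nat.exists_mul_mod_eq_gcd (k := L) (n := r) (by rwa [Nat.gcd_comm])
      rw [Nat.gcd_comm, ← hu, rotate_congr (Nat.mod_modEq _ _), Nat.mul_comm]
      exact rotate_mul_eq_self h u
    · rw [heq]
      exact rotate_length w
  · intro h
    obtain ⟨t, ht⟩ := L.gcd_dvd_right r
    rw [ht, Nat.mul_comm]
    exact rotate_mul_eq_self h t

theorem rotate_apply [NeZero L] (r : ℕ) (w : Fin L → A) (j : Fin L) :
    rotate r w j = w (j + Fin.ofNat L r) := by
  simp only [rotate]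
  congr 1
  ext
  simp [Fin.val_add]

theorem card_filter_rotate [NeZero L] [DecidableEq A] (r : ℕ) (w : Fin L → A) (a : A) :
    #{j | rotate r w j = a} = #{j | w j = a} := by
  refine card_equiv (Equiv.addRight (Fin.ofNat L r)) fun j => ?_
  simp [rotate_apply]

end Rotation

section Periodic

variable {L d : ℕ} {A : Type*} [NeZero d]

def periodicExtend (L : ℕ) (b : Fin d → A) : Fin L → A :=
  fun j => b (Fin.ofNat d j)

theorem rotate_periodicExtend (hd : d ∣ L) (b : Fin d → A) :
    rotate d (periodicExtend L b) = periodicExtend L b := by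
  funext j
  simp only [rotate, periodicExtend]
  congr 1
  ext
  simp [Nat.mod_mod_of_dvd _ hd]

theorem periodicExtend_castLE (hdL : d ≤ L) (b : Fin d → A) (i : Fin d) :
    periodicExtend L b (Fin.castLE hdL i) = b i := by
  simp [periodicExtend]

theorem periodicExtend_of_rotate_eq_self (hdL : d ≤ L) {w : Fin L → A} (h : rotate d w = w) :
    periodicExtend L (fun i => w (Fin.castLE hdL i)) = w := by
  funext j
  have hj := congrFun (rotate_mul_eq_self h (j / d)) (Fin.castLE hdL (Fin.ofNat d j))
  simp only [rotate, Fin.val_castLE, Fin.val_ofNat, Nat.mod_add_div', Nat.mod_eq_of_lt j.isLt] at hj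
  exact hj.symm

def periodicEquiv (hdL : d ≤ L) (hd : d ∣ L) :
    {w : Fin L → A // rotate d w = w} ≃ (Fin d → A) where
  toFun w i := w.1 (Fin.castLE hdL i)
  invFun b := ⟨periodicExtend L b, rotate_periodicExtend hd b⟩
  left_inv w := Subtype.ext (periodicExtend_of_rotate_eq_self hdL w.2)
  right_inv b := funext (periodicExtend_castLE hdL b)

theorem card_filter_periodicExtend [DecidableEq A] (hd : d ∣ L) (b : Fin d → A) (a : A) :
    #{j | periodicExtend L b j = a} = L / d * #{i | b i = a} := by
  obtain ⟨k, rfl⟩ := hd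
  let e : Fin k × Fin d ≃ Fin (d * k) := finProdFinEquiv.trans (finCongr (Nat.mul_comm k d))
  calc #{j | periodicExtend (d * k) b j = a} = #{x : Fin k × Fin d | b x.2 = a} := by
        refine (card_equiv e fun x => ?_).symm
        have : Fin.ofNat d (e x) = x.2 := Fin.ext (by simp [e, Nat.mod_eq_of_lt x.2.isLt])
        rw [mem_filter_univ, mem_filter_univ, periodicExtend, this]
    _ = d * k / d * #{i | b i = a} := by
        rw [← univ_product_univ, filter_product_right (fun i => b i = a), card_product, card_univ,
          Fintype.card_fin, Nat.mul_div_cancel_left k (NeZero.pos d)]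

end Periodic

theorem sum_range_gcd_eq_sum_divisors {M : Type*} [AddCommMonoid M] (L : ℕ) (F : ℕ → M) :
    ∑ r ∈ range L, F (L.gcd r) = ∑ k ∈ L.divisors, φ k • F (L / k) := by
  have hmaps : ∀ r ∈ range L, L.gcd r ∈ L.divisors := fun r hr =>
    Nat.mem_divisors.2 ⟨L.gcd_dvd_left r, by rw [mem_range] at hr; omega⟩
  calc ∑ r ∈ range L, F (L.gcd r)
      = ∑ d ∈ L.divisors, ∑ r ∈ range L with L.gcd r = d, F (L.gcd r) :=
        (sum_fiberwise_of_maps_to hmaps _).symm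
    _ = ∑ d ∈ L.divisors, φ (L / d) • F d := by
        refine sum_congr rfl fun d hd => ?_
        rw [sum_congr rfl fun r hr => by rw [(mem_filter.1 hr).2], sum_const,
          ← Nat.totient_div_of_dvd (Nat.dvd_of_mem_divisors hd)]
    _ = ∑ k ∈ L.divisors, φ k • F (L / k) := by
        rw [← Nat.sum_div_divisors L]
        refine sum_congr rfl fun d hd => ?_
        rw [Nat.div_div_self (Nat.dvd_of_mem_divisors hd) (Nat.mem_divisors.1 hd).2]

section Necklaces

variable {A : Type*} [DecidableEq A]

abbrev WordWithContent (L : ℕ) (c : A → ℕ) : Type _ :=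
  {w : Fin L → A // ∀ a, #{j | w j = a} = c a}

variable {L : ℕ} {c : A → ℕ}

theorem card_rotate_eq_self_wordWithContent [NeZero L] {d : ℕ} (hd : d ∣ L) :
    Nat.card {w : WordWithContent L c // rotate d w.1 = w.1}
      = Nat.card {b : Fin d → A // ∀ a, L / d * #{i | b i = a} = c a} := by
  have : NeZero d := ⟨by rintro rfl; exact NeZero.ne L (Nat.eq_zero_of_zero_dvd hd)⟩
  let e := periodicEquiv (A := A) (Nat.le_of_dvd (NeZero.pos L) hd) hd
  refine Nat.card_congr (((Equiv.subtypeSubtypeEquivSubtypeInter _ _).trans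
    (Equiv.subtypeEquivRight fun _ => and_comm)).trans
    ((Equiv.subtypeSubtypeEquivSubtypeInter _ _).symm.trans (e.subtypeEquiv fun w => ?_)))
  obtain ⟨b, rfl⟩ := e.symm.surjective w
  simp only [Equiv.apply_symm_apply]
  exact forall_congr' fun a => by rw [← card_filter_periodicExtend hd]; rfl

instance [NeZero L] : AddAction (Fin L) (WordWithContent L c) where
  vadd i w := ⟨rotate i w.1, fun a => (card_filter_rotate i w.1 a).trans (w.2 a)⟩
  zero_vadd w := Subtype.ext (rotate_zero w.1)
  add_vadd i j w := Subtype.ext <| by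
    change rotate ((i + j : ℕ) % L) w.1 = rotate i (rotate j w.1)
    rw [rotate_rotate, rotate_congr (Nat.mod_modEq _ _)]

theorem vadd_wordWithContent_val [NeZero L] (i : Fin L) (w : WordWithContent L c) :
    (i +ᵥ w).1 = rotate i w.1 := rfl

theorem rotEquiv_iff_orbitRel [NeZero L] (w w' : WordWithContent L c) :
    rotEquiv w.1 w'.1 ↔ AddAction.orbitRel (Fin L) _ w w' := by
  rw [AddAction.orbitRel_apply, AddAction.mem_orbit_symm]
  constructor
  · rintro ⟨r, hr⟩
    refine ⟨Fin.ofNat L r, Subtype.ext ?_⟩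
    rw [vadd_wordWithContent_val, hr]
    exact rotate_congr (Nat.mod_modEq r L) w.1
  · rintro ⟨i, rfl⟩
    exact ⟨i, rfl⟩

theorem card_fixedBy_wordWithContent [NeZero L] (i : Fin L) :
    Nat.card (AddAction.fixedBy (WordWithContent L c) i)
      = Nat.card {b : Fin (L.gcd i) → A // ∀ a, L / L.gcd i * #{j | b j = a} = c a} := by
  rw [← card_rotate_eq_self_wordWithContent (L.gcd_dvd_left i)]
  exact Nat.card_congr (Equiv.subtypeEquivRight fun w =>
    Subtype.ext_iff.trans (rotate_eq_self_iff_gcd i w.1))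

end Necklaces

theorem mul_card_necklaces {A : Type*} [Finite A] [DecidableEq A] (L : ℕ) (c : A → ℕ) :
    L * Nat.card (Quot fun w w' : WordWithContent L c => rotEquiv w.1 w'.1)
      = ∑ k ∈ L.divisors,
          φ k * Nat.card {b : Fin (L / k) → A // ∀ a, k * #{i | b i = a} = c a} := by
  rcases eq_or_ne L 0 with rfl | hL
  · simp
  have : NeZero L := ⟨hL⟩
  have hquot : Quot (fun w w' : WordWithContent L c => rotEquiv w.1 w'.1)
      = AddAction.orbitRel.Quotient (Fin L) (WordWithContent L c) :=
    congrArg Quot (funext₂ fun w w' => propext (rotEquiv_iff_orbitRel w w'))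
  classical
  have : Fintype (WordWithContent L c) := Fintype.ofFinite _
  have burnside :=
    AddAction.sum_card_fixedBy_eq_card_orbits_mul_card_addGroup (Fin L) (WordWithContent L c)
  simp only [Fintype.card_eq_nat_card, card_fixedBy_wordWithContent, Nat.card_fin] at burnside
  let F d := Nat.card {b : Fin d → A // ∀ a, L / d * #{j | b j = a} = c a}
  rw [hquot, mul_comm, ← burnside, Fin.sum_univ_eq_sum_range (fun r => F (L.gcd r)),
    sum_range_gcd_eq_sum_divisors L F]
  refine sum_congr rfl fun k hk => ?_
  simp only [F, smul_eq_mul, Nat.div_div_self (Nat.dvd_of_mem_divisors hk) hL]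

section Binary

def binaryWordEquivFinset (α : Type*) [Fintype α] [DecidableEq α] :
    (α → Fin 2) ≃ Finset α where
  toFun b := {j | b j = 1}
  invFun s j := if j ∈ s then 1 else 0
  left_inv b := funext fun j => by
    generalize hx : b j = x
    fin_cases x <;> simp [hx]
  right_inv s := by ext; simp

theorem card_binaryWords_count_one (n e : ℕ) :
    Nat.card {b : Fin n → Fin 2 // #{i | b i = 1} = e} = n.choose e := by
  refine (Nat.card_congr ((binaryWordEquivFinset (Fin n)).subtypeEquiv (q := fun s => #s = e)
    fun _ => Iff.rfl)).trans ?_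
  rw [Nat.card_eq_fintype_card, Fintype.card_finset_len, Fintype.card_fin]

theorem card_filter_eq_zero_add_card_filter_eq_one {α : Type*} [Fintype α] (b : α → Fin 2) :
    #{i | b i = 0} + #{i | b i = 1} = Fintype.card α := by
  rw [← Fin.sum_univ_two (fun a => #{i | b i = a}), ← card_eq_sum_card_fiberwise (by simp),
    card_univ]

theorem card_balanced_binaryWords (e : ℕ) :
    Nat.card {b : Fin (2 * e) → Fin 2 // ∀ a, #{i | b i = a} = e} = (2 * e).choose e := by
  rw [← card_binaryWords_count_one]
  refine Nat.card_congr (Equiv.subtypeEquivRight fun b => ⟨fun h => h 1, fun h a => ?_⟩)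
  have := card_filter_eq_zero_add_card_filter_eq_one b
  rw [Fintype.card_fin] at this
  fin_cases a <;> simp <;> omega

theorem card_binaryWords_mul_count_eq (k m : ℕ) (hk : 0 < k) :
    Nat.card {b : Fin (2 * m / k) → Fin 2 // ∀ a, k * #{i | b i = a} = m}
      = if k ∣ m then (2 * m / k).choose (m / k) else 0 := by
  split_ifs with h
  · obtain ⟨e, rfl⟩ := h
    rw [Nat.mul_left_comm, Nat.mul_div_cancel_left _ hk, Nat.mul_div_cancel_left _ hk,
      ← card_balanced_binaryWords]
    exact Nat.card_congr (Equiv.subtypeEquivRight fun b =>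
      forall_congr' fun a => Nat.mul_left_cancel_iff hk)
  · rw [Nat.card_eq_zero]
    exact Or.inl ⟨fun b => h ⟨_, (b.2 0).symm⟩⟩

end Binary

theorem count_balanced_necklaces_general (m : ℕ) :
    2 * m *
      Nat.card (Quot (fun w w' : {w : Fin (2 * m) → Fin 2 //
          ∀ a : Fin 2, (Finset.univ.filter (fun j => w j = a)).card = m} =>
        rotEquiv w.1 w'.1))
      = ∑ d ∈ m.divisors, Nat.totient d * Nat.choose (2 * m / d) (m / d) := by
  rw [mul_card_necklaces, sum_congr rfl fun k hk => by
    rw [card_binaryWords_mul_count_eq k m (Nat.pos_of_mem_divisors hk), mul_ite, mul_zero],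
    ← sum_filter]
  rcases eq_or_ne m 0 with rfl | hm
  · simp
  · rw [Nat.divisors_filter_dvd_of_dvd (by omega) (dvd_mul_left m 2)]

/-- Counting (1,1)-balanced necklaces: if `N_m` is the number of rotation-equivalence
classes of binary words of length `2m` with exactly `m` letters of each kind, then
`2m · N_m = Σ_{d ∣ m} φ(d) · C(2m/d, m/d)`. -/
theorem count_balanced_necklaces (m : ℕ) (hm : 1 ≤ m) :
    2 * m *
      Nat.card (Quot (fun w w' : {w : Fin (2 * m) → Fin 2 //
          ∀ a : Fin 2, (Finset.univ.filter (fun j => w j = a)).card = m} =>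
        rotEquiv w.1 w'.1))
      = ∑ d ∈ m.divisors, Nat.totient d * Nat.choose (2 * m / d) (m / d) :=
  count_balanced_necklaces_general m
end
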